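/- arXiv:math/0703131 — 2 statements merged into one kernel-verified Lean document; each statement's English description precedes it below -/
import Mathlib

section
/- A polynomial p ∈ ℂ[x₀,x₁,x₂] satisfies σ_t p = p for all t ∈ ℂ if and only if p lies in the ℂ-subalgebra generated by x₀ and x₁² − x₀·x₂; that is, the subalgebra of σ-invariants equals Algebra.adjoin ℂ {x₀, x₁² − x₀·x₂}. -/
open MvPolynomial

/-! For `x₀ ≠ 0` the element `t = -x₁/x₀` moves `x` to `(x₀, 0, -D/x₀)`, where
`D = x₁² - x₀x₂` is invariant. Hence an invariant `p` satisfies `p(x) = p(x₀, 0, -D(x)/x₀)`, so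
`x₀ᴺ p = q(x₀, D)` for some polynomial `q`. At the points `(0, b, 0)` the invariant `D = b²` takes
every value, so `x₀ ∣ q`, and the powers of `x₀` cancel one at a time. -/

/-- The `ℂ`-algebra endomorphism of `ℂ[x₀,x₁,x₂]` given by
`σ_t(x₀) = x₀`, `σ_t(x₁) = x₁ + t·x₀`, `σ_t(x₂) = x₂ + 2t·x₁ + t²·x₀`
(the `ℂ⁺`-action on `Sym²(ℂ²)`). -/
noncomputable def sigma (t : ℂ) :
    MvPolynomial (Fin 3) ℂ →ₐ[ℂ] MvPolynomial (Fin 3) ℂ :=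
  aeval ![X 0, X 1 + C t * X 0, X 2 + C (2 * t) * X 1 + C (t ^ 2) * X 0]

namespace MvPolynomial

variable {R σ : Type*}

theorem eval_aeval {τ : Type*} [CommSemiring R] (x : τ → R) (f : σ → MvPolynomial τ R)
    (p : MvPolynomial σ R) :
    eval x (aeval f p) = eval (fun i ↦ eval x (f i)) p := by
  rw [aeval_def, algebraMap_eq, ← eval_assoc]; rfl

section

variable [CommRing R] [IsDomain R] [Infinite R]

theorem eq_zero_of_eval_eq_zero_of_ne_zero (i : σ) {q : MvPolynomial σ R}
    (h : ∀ x : σ → R, x i ≠ 0 → eval x q = 0) : q = 0 := by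
  have hXq : X i * q = 0 := funext fun x ↦ by
    by_cases hx : x i = 0 <;> simp [hx, h]
  exact (mul_eq_zero.mp hXq).resolve_left (X_ne_zero i)

theorem X_zero_dvd_of_eval_cons_zero {n : ℕ} {q : MvPolynomial (Fin (n + 1)) R}
    (h : ∀ s : Fin n → R, eval (Fin.cons 0 s) q = 0) : X 0 ∣ q := by
  have hcoeff : (finSuccEquiv R n q).coeff 0 = 0 := funext fun s ↦ by
    rw [map_zero, ← Polynomial.coeff_map, Polynomial.coeff_zero_eq_eval_zero,
      ← eval_eq_eval_mv_eval', h]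
  obtain ⟨r, hr⟩ := Polynomial.X_dvd_iff.mpr hcoeff
  refine ⟨(finSuccEquiv R n).symm r, (finSuccEquiv R n).injective ?_⟩
  rw [map_mul, hr, AlgEquiv.apply_symm_apply, finSuccEquiv_X_zero]

end

end MvPolynomial

theorem exists_pow_mul_eval_eq {K : Type*} [Field K] (p : MvPolynomial (Fin 3) K) :
    ∃ (N : ℕ) (q : MvPolynomial (Fin 2) K),
      ∀ a b : K, a ≠ 0 → a ^ N * eval ![a, 0, -b / a] p = eval ![a, b] q := by
  induction p using MvPolynomial.induction_on with
  | C c => exact ⟨0, C c, by simp⟩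
  | add p₁ p₂ hp₁ hp₂ =>
    obtain ⟨N, r, hr⟩ := hp₁
    obtain ⟨M, s, hs⟩ := hp₂
    refine ⟨N + M, X 0 ^ M * r + X 0 ^ N * s, fun a b ha ↦ ?_⟩
    simp only [map_add, map_mul, map_pow, eval_X, Matrix.cons_val_zero, ← hr a b ha, ← hs a b ha]
    ring
  | mul_X p i hp =>
    obtain ⟨N, r, hr⟩ := hp
    fin_cases i
    · exact ⟨N, r * X 0, fun a b ha ↦ by
      simp only [Fin.zero_eta, map_mul, eval_X, Matrix.cons_val_zero, ← hr a b ha]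
      ring⟩
    · exact ⟨N, 0, fun a b ha ↦ by simp⟩
    · refine ⟨N + 1, -(r * X 1), fun a b ha ↦ ?_⟩
      simp only [Fin.reduceFinMk, map_mul, map_neg, eval_X, Matrix.cons_val, Matrix.cons_val_one,
        Matrix.cons_val_fin_one, ← hr a b ha]
      field_simp
      ring

noncomputable def discr : MvPolynomial (Fin 3) ℂ := X 1 ^ 2 - X 0 * X 2

noncomputable def invariantsHom : MvPolynomial (Fin 2) ℂ →ₐ[ℂ] MvPolynomial (Fin 3) ℂ :=
  aeval ![X 0, discr]

theorem eval_sigma (t : ℂ) (x : Fin 3 → ℂ) (p : MvPolynomial (Fin 3) ℂ) :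
    eval x (sigma t p) = eval ![x 0, x 1 + t * x 0, x 2 + 2 * t * x 1 + t ^ 2 * x 0] p := by
  rw [sigma, eval_aeval]
  congr
  ext i
  fin_cases i <;> simp

theorem sigma_X_zero (t : ℂ) : sigma t (X 0) = X 0 := by simp [sigma]

theorem sigma_discr (t : ℂ) : sigma t discr = discr := by
  simp only [sigma, discr, map_sub, map_mul, map_pow, aeval_X, map_ofNat, Matrix.cons_val_zero,
    Matrix.cons_val_one, Matrix.cons_val]
  ring

theorem eval_eq_eval_of_sigma_invariant {p : MvPolynomial (Fin 3) ℂ} (hp : ∀ t, sigma t p = p)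
    (x : Fin 3 → ℂ) (hx : x 0 ≠ 0) : eval x p = eval ![x 0, 0, -eval x discr / x 0] p := by
  conv_lhs => rw [← hp (-x 1 / x 0), eval_sigma]
  refine congrArg (eval · p) (funext fun i ↦ ?_)
  fin_cases i <;> simp [discr] <;> field_simp <;> ring

theorem exists_X_zero_pow_mul_mem_range {p : MvPolynomial (Fin 3) ℂ} (hp : ∀ t, sigma t p = p) :
    ∃ N : ℕ, X 0 ^ N * p ∈ invariantsHom.range := by
  obtain ⟨N, q, hq⟩ := exists_pow_mul_eval_eq p
  refine ⟨N, (AlgHom.mem_range _).mpr ⟨q, ?_⟩⟩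
  refine sub_eq_zero.mp (eq_zero_of_eval_eq_zero_of_ne_zero 0 fun x hx ↦ ?_)
  rw [map_sub, sub_eq_zero, invariantsHom, eval_aeval, map_mul, map_pow, eval_X,
    eval_eq_eval_of_sigma_invariant hp x hx, hq _ _ hx]
  congr
  ext i
  fin_cases i <;> simp

theorem mem_range_of_X_zero_pow_mul_mem_range {N : ℕ} {p : MvPolynomial (Fin 3) ℂ}
    (h : X 0 ^ N * p ∈ invariantsHom.range) : p ∈ invariantsHom.range := by
  induction N with
  | zero => simpa using h
  | succ N ih =>
    obtain ⟨q, hq⟩ := (AlgHom.mem_range _).mp h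
    have hq0 : ∀ s : Fin 1 → ℂ, eval (Fin.cons 0 s) q = 0 := fun s ↦ by
      obtain ⟨b, hb⟩ := IsAlgClosed.exists_pow_nat_eq (s 0) two_pos
      have hpt : (fun i ↦ eval ![0, b, 0] (![X 0, discr] i)) = Fin.cons 0 s := by
        funext i
        fin_cases i <;> simp [discr, hb]
      have hval := congrArg (eval ![0, b, 0]) hq
      rw [invariantsHom, eval_aeval, hpt] at hval
      simpa using hval
    obtain ⟨r, rfl⟩ := X_zero_dvd_of_eval_cons_zero hq0
    refine ih ((AlgHom.mem_range _).mpr ⟨r, mul_left_cancel₀ (X_ne_zero (0 : Fin 3)) ?_⟩)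
    rw [← mul_assoc, ← pow_succ', ← hq, map_mul, invariantsHom, aeval_X, Matrix.cons_val_zero]

theorem adjoin_eq_range_invariantsHom :
    Algebra.adjoin ℂ ({X 0, X 1 ^ 2 - X 0 * X 2} : Set (MvPolynomial (Fin 3) ℂ)) =
      invariantsHom.range := by
  rw [invariantsHom, aeval_range, Matrix.range_cons_cons_empty, discr]

/-- A polynomial `p ∈ ℂ[x₀,x₁,x₂]` is `σ`-invariant if and only if it lies in the
`ℂ`-subalgebra generated by `x₀` and `x₁² − x₀·x₂`. -/
theorem invariant_iff_mem_adjoin (p : MvPolynomial (Fin 3) ℂ) :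
    (∀ t : ℂ, sigma t p = p) ↔
      p ∈ Algebra.adjoin ℂ
        ({X 0, X 1 ^ 2 - X 0 * X 2} : Set (MvPolynomial (Fin 3) ℂ)) := by
  refine ⟨fun hp ↦ ?_, fun hp t ↦ ?_⟩
  · obtain ⟨N, hN⟩ := exists_X_zero_pow_mul_mem_range hp
    rw [adjoin_eq_range_invariantsHom]
    exact mem_range_of_X_zero_pow_mul_mem_range hN
  · refine AlgHom.adjoin_le_equalizer (sigma t) (AlgHom.id ℂ _) ?_ hp
    rintro _ (rfl | rfl)
    exacts [sigma_X_zero t, sigma_discr t]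
end

section
/- Let G be a group acting on the polynomial ring ℂ[x₁,…,xₙ] = MvPolynomial (Fin n) ℂ by ℂ-algebra automorphisms. Then there exists a finite set S of G-invariant polynomials which is separating: for any two points a, b ∈ ℂⁿ, if every element of S takes the same value at a and at b, then every G-invariant polynomial takes the same value at a and at b. -/
open MvPolynomial

/-- For any group `G` acting on `ℂ[x₁,…,xₙ]` by `ℂ`-algebra automorphisms (given by a
homomorphism `ρ` into the `ℂ`-algebra automorphism group), there exists a finite
separating set of `G`-invariant polynomials: whenever all its elements take the same
value at two points `a, b ∈ ℂⁿ`, so does every `G`-invariant polynomial. -/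
theorem exists_finite_separating_set_of_invariants
    (n : ℕ) (G : Type*) [Group G]
    (ρ : G →* (MvPolynomial (Fin n) ℂ ≃ₐ[ℂ] MvPolynomial (Fin n) ℂ)) :
    ∃ S : Finset (MvPolynomial (Fin n) ℂ),
      (∀ f ∈ S, ∀ g : G, ρ g f = f) ∧
      ∀ a b : Fin n → ℂ,
        (∀ f ∈ S, eval a f = eval b f) →
        ∀ p : MvPolynomial (Fin n) ℂ, (∀ g : G, ρ g p = p) →
          eval a p = eval b p := by
  classical
  set X : Set (MvPolynomial (Fin n ⊕ Fin n) ℂ) :=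
    {q | ∃ p : MvPolynomial (Fin n) ℂ, (∀ g : G, ρ g p = p) ∧
      q = rename Sum.inl p - rename Sum.inr p} with hX
  -- The span of X is finitely generated since the ring is Noetherian.
  have hfg : (Ideal.span X).FG := IsNoetherian.noetherian _
  obtain ⟨T, hT⟩ := hfg
  -- Each generator is in the span of a finite subset of X.
  have hmem : ∀ q ∈ T, ∃ u : Finset (MvPolynomial (Fin n ⊕ Fin n) ℂ),
      ↑u ⊆ X ∧ q ∈ Ideal.span (u : Set (MvPolynomial (Fin n ⊕ Fin n) ℂ)) := by
    intro q hq
    have : q ∈ Ideal.span X := by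
      rw [← hT]; exact Ideal.subset_span hq
    exact Submodule.mem_span_finite_of_mem_span this
  choose u hu₁ hu₂ using hmem
  -- Finite subset of X spanning the ideal.
  set U : Finset (MvPolynomial (Fin n ⊕ Fin n) ℂ) := T.attach.biUnion (fun q => u q q.2) with hU
  have hUX : (U : Set (MvPolynomial (Fin n ⊕ Fin n) ℂ)) ⊆ X := by
    intro q hq
    simp only [hU, Finset.coe_biUnion, Set.mem_iUnion, Finset.mem_coe] at hq
    obtain ⟨t, ht, hqt⟩ := hq
    exact hu₁ t t.2 hqt
  have hspan : Ideal.span X ≤ Ideal.span (U : Set (MvPolynomial (Fin n ⊕ Fin n) ℂ)) := by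
    rw [← hT, Ideal.span_le]
    intro q hq
    refine Ideal.span_mono ?_ (hu₂ q hq)
    intro x hx
    simp only [hU, Finset.coe_biUnion, Set.mem_iUnion, Finset.mem_coe]
    exact ⟨⟨q, hq⟩, Finset.mem_attach _ _, hx⟩
  -- Pick an invariant polynomial for each element of U.
  have hchoose : ∀ q : {x // x ∈ U}, ∃ p : MvPolynomial (Fin n) ℂ,
      (∀ g : G, ρ g p = p) ∧ (q : MvPolynomial (Fin n ⊕ Fin n) ℂ)
        = rename Sum.inl p - rename Sum.inr p :=
    fun q => hUX q.2
  choose pf hpf₁ hpf₂ using hchoose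
  refine ⟨U.attach.image pf, ?_, ?_⟩
  · intro f hf g
    simp only [Finset.mem_image] at hf
    obtain ⟨q, _, rfl⟩ := hf
    exact hpf₁ q g
  · intro a b hab p hp
    -- Evaluate at Sum.elim a b; the ideal span U is in the kernel.
    set ev : MvPolynomial (Fin n ⊕ Fin n) ℂ →+* ℂ := eval (Sum.elim a b) with hev
    have hker : Ideal.span (U : Set (MvPolynomial (Fin n ⊕ Fin n) ℂ)) ≤ RingHom.ker ev := by
      rw [Ideal.span_le]
      intro q hq
      have hq' : q ∈ U := hq
      have := hpf₂ ⟨q, hq'⟩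
      simp only [RingHom.mem_ker, hev]
      rw [show q = _ from this]
      have heq : eval a (pf ⟨q, hq'⟩) = eval b (pf ⟨q, hq'⟩) := by
        apply hab
        exact Finset.mem_image.mpr ⟨⟨q, hq'⟩, Finset.mem_attach _ _, rfl⟩
      rw [SetLike.mem_coe, RingHom.mem_ker]
      simp only [map_sub, eval_rename]
      have h1 : Sum.elim a b ∘ Sum.inl = a := rfl
      have h2 : Sum.elim a b ∘ Sum.inr = b := rfl
      rw [h1, h2, heq, sub_self]
    have hpX : rename Sum.inl p - rename Sum.inr p ∈ Ideal.span X :=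
      Ideal.subset_span ⟨p, hp, rfl⟩
    have := hker (hspan hpX)
    simp only [RingHom.mem_ker, hev, map_sub, eval_rename] at this
    have h1 : Sum.elim a b ∘ Sum.inl = a := rfl
    have h2 : Sum.elim a b ∘ Sum.inr = b := rfl
    rw [h1, h2, sub_eq_zero] at this
    exact this
end
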